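/- Let a, b, t be integers with 1 ≤ a ≤ b < t, and let n be a positive integer divisible by 2t - 2. Then ex(n, K_{a,b}, K_{1,t}) = N(K_{a,b}, (n/(2t-2))·K_{t-1,t-1}), where (n/(2t-2))·K_{t-1,t-1} is the vertex-disjoint union of n/(2t-2) copies of K_{t-1,t-1}. -/

import Mathlib

open SimpleGraph

/-- `F` is contained in `G` as a subgraph, i.e. there is an injective graph
homomorphism from `F` to `G`. -/
def ContainsCopy {α β : Type*} (F : SimpleGraph α) (G : SimpleGraph β) : Prop :=
  ∃ f : F →g G, Function.Injective f

/-- `N(H,G)`: the number of subgraphs of `G` isomorphic to `H`. -/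
noncomputable def copyCount' {α β : Type*} (H : SimpleGraph α) (G : SimpleGraph β) : ℕ :=
  Nat.card {G' : G.Subgraph // Nonempty (H ≃g G'.coe)}

/-- `ex(n,H,F)`: the maximum number of copies of `H` in an `F`-free graph on `n` vertices. -/
noncomputable def exGen (n : ℕ) {α β : Type*} (H : SimpleGraph α) (F : SimpleGraph β) : ℕ :=
  sSup {m | ∃ G : SimpleGraph (Fin n), ¬ ContainsCopy F G ∧ m = copyCount' H G}

/-- The complete bipartite graph `K_{a,b}`. -/
abbrev Kbip (a b : ℕ) : SimpleGraph (Fin a ⊕ Fin b) := completeBipartiteGraph (Fin a) (Fin b)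

/-- `K̄_{a,b}`: obtained from `K_{a,b}` by adding all edges inside the part of size `a`. -/
def KbipBar (a b : ℕ) : SimpleGraph (Fin a ⊕ Fin b) :=
  SimpleGraph.fromRel (fun u _ => u.isLeft)

/-- `k` vertex-disjoint copies of `G`. -/
def disjCopies (k : ℕ) {α : Type*} (G : SimpleGraph α) : SimpleGraph (Fin k × α) :=
  SimpleGraph.fromRel (fun u v => u.1 = v.1 ∧ G.Adj u.2 v.2)

/-- The vertex-disjoint union of `G` and `H`. -/
def disjSum {α β : Type*} (G : SimpleGraph α) (H : SimpleGraph β) : SimpleGraph (α ⊕ β) :=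
  SimpleGraph.fromRel (fun u v =>
    (∃ x y, u = Sum.inl x ∧ v = Sum.inl y ∧ G.Adj x y) ∨
    (∃ x y, u = Sum.inr x ∧ v = Sum.inr y ∧ H.Adj x y))

/-- Placing a graph `G0` on the `Fin b`-part of the vertex set `Fin a ⊕ Fin b`. -/
def liftRight (a : ℕ) {b : ℕ} (G0 : SimpleGraph (Fin b)) : SimpleGraph (Fin a ⊕ Fin b) :=
  SimpleGraph.fromRel (fun u v => ∃ x y, u = Sum.inr x ∧ v = Sum.inr y ∧ G0.Adj x y)

/-!
A `K_{1,t}`-free graph has maximum degree at most `t - 1`. A labelled copy `f` of `K_{a,b}` is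
determined by the dart `(f (inl 0), f (inr 0))` together with injections of the remaining
`b - 1` and `a - 1` vertices into the neighbourhood of one end of the dart minus its other end.
Hence an `n`-vertex `K_{1,t}`-free graph has at most
`n (t - 1) (t - 2)_{(a - 1)} (t - 2)_{(b - 1)}` labelled copies of `K_{a,b}`, and
`(n / (2t - 2)) · K_{t-1,t-1}` has that many. Unlabelled copies are labelled copies divided by
`|Aut K_{a,b}|`, so the same comparison holds for `N(K_{a,b}, ·)`.
-/

open Function

lemma Nat.descFactorial_le_descFactorial {n n' : ℕ} (h : n ≤ n') (k : ℕ) :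
    n.descFactorial k ≤ n'.descFactorial k := by
  induction k with
  | zero => simp
  | succ k ih =>
    rw [Nat.descFactorial_succ, Nat.descFactorial_succ]
    exact Nat.mul_le_mul (Nat.sub_le_sub_right h k) ih

namespace SimpleGraph

section CopyCount

variable {V V' W : Type*} {G : SimpleGraph V} {G' : SimpleGraph V'} {H : SimpleGraph W}

lemma containsCopy_iff_isContained : ContainsCopy H G ↔ H ⊑ G :=
  ⟨fun ⟨f, hf⟩ => ⟨⟨f, hf⟩⟩, fun ⟨f⟩ => ⟨f.toHom, f.injective⟩⟩

lemma Subgraph.heq_iso_of_eq {S T : G.Subgraph} (hST : S = T) {φ : H ≃g S.coe}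
    {ψ : H ≃g T.coe} (h : ∀ x, (φ x : V) = ψ x) : HEq φ ψ := by
  subst hST
  exact heq_of_eq (RelIso.ext fun x => Subtype.ext (h x))

lemma Subgraph.toSubgraph_coeCopy_comp (G' : G.Subgraph) (e : H ≃g G'.coe) :
    (G'.coeCopy.comp e.toCopy).toSubgraph = G' := by
  change Subgraph.map (G'.hom.comp e.toHom) ⊤ = G'
  rw [Subgraph.map_comp, Subgraph.map_iso_top, Subgraph.map_hom_top]

noncomputable def copyEquivSigmaIso :
    Copy H G ≃ Σ G' : {G' : G.Subgraph // Nonempty (H ≃g G'.coe)}, (H ≃g G'.1.coe) where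
  toFun f := ⟨⟨f.toSubgraph, ⟨f.isoToSubgraph⟩⟩, f.isoToSubgraph⟩
  invFun p := p.1.1.coeCopy.comp p.2.toCopy
  left_inv f := by ext; rfl
  right_inv := fun ⟨⟨G', _⟩, e⟩ => Sigma.ext (Subtype.ext (G'.toSubgraph_coeCopy_comp e))
    (Subgraph.heq_iso_of_eq (G'.toSubgraph_coeCopy_comp e) fun _ => rfl)

theorem card_copy_eq_copyCount'_mul :
    Nat.card (Copy H G) = copyCount' H G * Nat.card (H ≃g H) := by
  rw [copyCount', ← Nat.card_prod, Nat.card_congr copyEquivSigmaIso]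
  exact Nat.card_congr <| (Equiv.sigmaCongrRight fun G' =>
    RelIso.relIsoCongr (RelIso.refl _) G'.2.some.symm).trans (Equiv.sigmaEquivProd _ _)

def Copy.congrRight (φ : G ≃g G') : Copy H G ≃ Copy H G' where
  toFun f := φ.toCopy.comp f
  invFun f := φ.symm.toCopy.comp f
  left_inv f := by ext; simp
  right_inv f := by ext; simp

lemma copyCount'_le_copyCount'_of_card_copy_le [Finite W]
    (h : Nat.card (Copy H G) ≤ Nat.card (Copy H G')) : copyCount' H G ≤ copyCount' H G' := by
  have : Finite (H ≃g H) := Finite.of_injective _ (DFunLike.coe_injective (F := H ≃g H))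
  have : Nonempty (H ≃g H) := ⟨.refl⟩
  rw [card_copy_eq_copyCount'_mul, card_copy_eq_copyCount'_mul] at h
  exact Nat.le_of_mul_le_mul_right h Nat.card_pos

lemma copyCount'_congr_right [Finite W] (φ : G ≃g G') : copyCount' H G = copyCount' H G' :=
  le_antisymm
    (copyCount'_le_copyCount'_of_card_copy_le (Nat.card_congr (Copy.congrRight φ)).le)
    (copyCount'_le_copyCount'_of_card_copy_le (Nat.card_congr (Copy.congrRight φ)).ge)

end CopyCount

section Star

variable {V : Type*} {G : SimpleGraph V}

lemma kbip_one_isContained_iff [Fintype V] [DecidableRel G.Adj] {t : ℕ} :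
    Kbip 1 t ⊑ G ↔ ∃ v, t ≤ G.degree v := by
  classical
  rw [completeBipartiteGraph_isContained_iff]
  simp only [Fintype.card_fin, Finset.card_eq_one]
  constructor
  · rintro ⟨_, right, ⟨v, rfl⟩, hright, hadj⟩
    refine ⟨v, hright ▸ ?_⟩
    rw [← card_neighborFinset_eq_degree]
    exact Finset.card_le_card fun w hw => (mem_neighborFinset ..).2 (hadj (by simp) hw)
  · rintro ⟨v, hv⟩
    rw [← card_neighborFinset_eq_degree] at hv
    obtain ⟨right, hsub, hcard⟩ := Finset.exists_subset_card_eq hv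
    refine ⟨{v}, right, ⟨v, rfl⟩, hcard, fun u hu w hw => ?_⟩
    rw [Finset.coe_singleton, Set.mem_singleton_iff] at hu
    exact hu ▸ (mem_neighborFinset ..).1 (hsub hw)

end Star

section DisjCopies

variable {α : Type*} {k m a b : ℕ} {H : SimpleGraph α}

lemma disjCopies_adj {u v : Fin k × α} :
    (disjCopies k H).Adj u v ↔ u.1 = v.1 ∧ H.Adj u.2 v.2 := by
  simp only [disjCopies, fromRel_adj]
  constructor
  · rintro ⟨-, h | h⟩
    · exact h
    · exact ⟨h.1.symm, h.2.symm⟩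
  · intro h
    exact ⟨fun huv => H.irrefl (huv ▸ h.2), Or.inl h⟩

lemma degree_disjCopies [Fintype α] [DecidableRel H.Adj] [DecidableRel (disjCopies k H).Adj]
    (c : Fin k) (x : α) : (disjCopies k H).degree (c, x) = H.degree x := by
  simp only [← card_neighborSet_eq_degree]
  refine Fintype.card_congr
    { toFun := fun y => ⟨y.1.2, (disjCopies_adj.1 y.2).2⟩
      invFun := fun z => ⟨(c, z.1), disjCopies_adj.2 ⟨rfl, z.2⟩⟩
      left_inv := fun ⟨⟨c', y⟩, h⟩ => ?_
      right_inv := fun _ => rfl }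
  obtain rfl : c = c' := (disjCopies_adj.1 h).1
  rfl

lemma degree_kbip_self_le [DecidableRel (Kbip m m).Adj] (x : Fin m ⊕ Fin m) :
    (Kbip m m).degree x ≤ m := by
  rw [← card_neighborFinset_eq_degree]
  rcases x with i | i
  · exact (Finset.card_le_card (t := Finset.univ.map .inr) fun y => by
      rcases y with _ | _ <;> simp).trans (by simp)
  · exact (Finset.card_le_card (t := Finset.univ.map .inl) fun y => by
      rcases y with _ | _ <;> simp).trans (by simp)

lemma not_containsCopy_kbip_one_disjCopies {t : ℕ} (hmt : m < t) :
    ¬ ContainsCopy (Kbip 1 t) (disjCopies k (Kbip m m)) := by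
  classical
  rw [containsCopy_iff_isContained, kbip_one_isContained_iff]
  rintro ⟨⟨c, x⟩, hx⟩
  rw [degree_disjCopies] at hx
  exact (degree_kbip_self_le x).not_gt (hmt.trans_le hx)

def kbipCopyInBlock (σ : Bool) (c : Fin k) (α : Fin a ↪ Fin m) (β : Fin b ↪ Fin m) :
    Copy (Kbip a b) (disjCopies k (Kbip m m)) :=
  ⟨⟨fun x => (c, bif σ then Sum.map α β x else (Sum.map α β x).swap), fun {x y} h => by
    rw [disjCopies_adj]
    refine ⟨rfl, ?_⟩
    cases σ <;> rcases x with _ | _ <;> rcases y with _ | _ <;> simp_all⟩, fun x y h => by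
    cases σ <;> rcases x with _ | _ <;> rcases y with _ | _ <;> simp_all⟩

lemma kbipCopyInBlock_apply (σ : Bool) (c : Fin k) (α : Fin a ↪ Fin m) (β : Fin b ↪ Fin m)
    (x : Fin a ⊕ Fin b) :
    kbipCopyInBlock σ c α β x = (c, bif σ then Sum.map α β x else (Sum.map α β x).swap) := rfl

lemma kbipCopyInBlock_injective :
    Injective fun p : Bool × Fin k × (Fin (a + 1) ↪ Fin m) × (Fin (b + 1) ↪ Fin m) =>
      kbipCopyInBlock p.1 p.2.1 p.2.2.1 p.2.2.2 := by
  rintro ⟨σ, c, α, β⟩ ⟨σ', c', α', β'⟩ h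
  have hx := fun x => DFunLike.congr_fun h x
  simp only [kbipCopyInBlock_apply, Prod.mk.injEq] at hx
  obtain ⟨rfl, hσ⟩ := hx (.inl 0)
  obtain rfl : σ = σ' := by cases σ <;> cases σ' <;> simp_all
  have hα : α = α' := Embedding.ext fun i => by
    cases σ <;> simpa using (hx (.inl i)).2
  have hβ : β = β' := Embedding.ext fun j => by
    cases σ <;> simpa using (hx (.inr j)).2
  rw [hα, hβ]

lemma le_card_copy_kbip_disjCopies :
    2 * k * (m.descFactorial (a + 1) * m.descFactorial (b + 1)) ≤
      Nat.card (Copy (Kbip (a + 1) (b + 1)) (disjCopies k (Kbip m m))) := by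
  have := DFunLike.finite (Copy (Kbip (a + 1) (b + 1)) (disjCopies k (Kbip m m)))
  refine le_of_eq_of_le ?_ (Nat.card_le_card_of_injective _ kbipCopyInBlock_injective)
  simp [Nat.card_eq_fintype_card, Fintype.card_embedding_eq, mul_assoc]

end DisjCopies

section UpperBound

variable {V : Type*} {G : SimpleGraph V} {a b : ℕ}

lemma Copy.adj_inl_inr (f : Copy (Kbip a b) G) (i : Fin a) (j : Fin b) :
    G.Adj (f (.inl i)) (f (.inr j)) :=
  f.toHom.map_adj (by simp)

lemma card_copy_kbip_fiber_le [Fintype V] [DecidableRel G.Adj] {u v : V} (huv : G.Adj u v) :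
    Nat.card {f : Copy (Kbip (a + 1) (b + 1)) G // f (.inl 0) = u ∧ f (.inr 0) = v} ≤
      (G.degree u - 1).descFactorial b * (G.degree v - 1).descFactorial a := by
  classical
  let restrict : {f : Copy (Kbip (a + 1) (b + 1)) G // f (.inl 0) = u ∧ f (.inr 0) = v} →
      (Fin b ↪ (G.neighborFinset u).erase v) × (Fin a ↪ (G.neighborFinset v).erase u) :=
    fun ⟨f, hu, hv⟩ =>
    (⟨fun j => ⟨f (.inr j.succ), Finset.mem_erase.2
        ⟨hv ▸ f.injective.ne (by simp), (mem_neighborFinset ..).2 (hu ▸ f.adj_inl_inr _ _)⟩⟩,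
      fun j j' h => Fin.succ_injective _ (Sum.inr_injective (f.injective congr($h.1)))⟩,
     ⟨fun i => ⟨f (.inl i.succ), Finset.mem_erase.2
        ⟨hu ▸ f.injective.ne (by simp), (mem_neighborFinset ..).2 (hv ▸ (f.adj_inl_inr _ _).symm)⟩⟩,
      fun i i' h => Fin.succ_injective _ (Sum.inl_injective (f.injective congr($h.1)))⟩)
  have hrestrict : Injective restrict := by
    rintro ⟨f, hfu, hfv⟩ ⟨g, hgu, hgv⟩ h
    simp only [restrict, Prod.mk.injEq] at h
    refine Subtype.ext (Copy.ext ?_)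
    rintro (i | j)
    · cases i using Fin.cases with
      | zero => rw [hfu, hgu]
      | succ i => exact congr($(DFunLike.congr_fun h.2 i).1)
    · cases j using Fin.cases with
      | zero => rw [hfv, hgv]
      | succ j => exact congr($(DFunLike.congr_fun h.1 j).1)
  refine (Nat.card_le_card_of_injective restrict hrestrict).trans_eq ?_
  simp only [Nat.card_eq_fintype_card, Fintype.card_prod, Fintype.card_embedding_eq,
    Fintype.card_coe, Fintype.card_fin, Finset.card_erase_of_mem ((mem_neighborFinset ..).2 huv),
    Finset.card_erase_of_mem ((mem_neighborFinset ..).2 huv.symm), card_neighborFinset_eq_degree]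

lemma card_copy_kbip_le [Fintype V] [DecidableRel G.Adj] {m : ℕ}
    (hdeg : ∀ v, G.degree v ≤ m + 1) :
    Nat.card (Copy (Kbip (a + 1) (b + 1)) G) ≤
      Fintype.card V * (m + 1) * (m.descFactorial b * m.descFactorial a) := by
  classical
  have := DFunLike.finite (Copy (Kbip (a + 1) (b + 1)) G)
  let baseDart (f : Copy (Kbip (a + 1) (b + 1)) G) : G.Dart :=
    ⟨(f (.inl 0), f (.inr 0)), f.adj_inl_inr 0 0⟩
  have hfiber (d : G.Dart) :
      Nat.card {f // baseDart f = d} ≤ m.descFactorial b * m.descFactorial a := by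
    rw [Nat.card_congr (Equiv.subtypeEquivRight
      (q := fun f => f (.inl 0) = d.fst ∧ f (.inr 0) = d.snd) fun f => by
        simp only [baseDart, Dart.ext_iff, Prod.ext_iff, eq_comm])]
    refine (card_copy_kbip_fiber_le d.adj).trans (Nat.mul_le_mul ?_ ?_) <;>
      exact Nat.descFactorial_le_descFactorial (by grind) _
  have hdarts : Fintype.card G.Dart ≤ Fintype.card V * (m + 1) := by
    rw [dart_card_eq_sum_degrees]
    exact (Finset.sum_le_sum fun v _ => hdeg v).trans_eq (by simp)
  calc Nat.card (Copy (Kbip (a + 1) (b + 1)) G)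
      = ∑ d : G.Dart, Nat.card {f // baseDart f = d} := by
        rw [← Nat.card_sigma, Nat.card_congr (Equiv.sigmaFiberEquiv baseDart)]
    _ ≤ ∑ _d : G.Dart, m.descFactorial b * m.descFactorial a :=
        Finset.sum_le_sum fun d _ => hfiber d
    _ ≤ _ := by
        rw [Finset.sum_const, Finset.card_univ, smul_eq_mul]
        exact Nat.mul_le_mul_right _ hdarts

lemma copyCount'_kbip_le_disjCopies [Fintype V] {k m : ℕ}
    (hV : Fintype.card V = 2 * k * (m + 1)) (hfree : ¬ ContainsCopy (Kbip 1 (m + 2)) G) :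
    copyCount' (Kbip (a + 1) (b + 1)) G ≤
      copyCount' (Kbip (a + 1) (b + 1)) (disjCopies k (Kbip (m + 1) (m + 1))) := by
  classical
  have hdeg (v : V) : G.degree v ≤ m + 1 := by
    rw [containsCopy_iff_isContained, kbip_one_isContained_iff, not_exists] at hfree
    exact Nat.le_of_lt_succ (not_le.1 (hfree v))
  apply copyCount'_le_copyCount'_of_card_copy_le
  calc Nat.card (Copy (Kbip (a + 1) (b + 1)) G)
      ≤ Fintype.card V * (m + 1) * (m.descFactorial b * m.descFactorial a) :=
        card_copy_kbip_le hdeg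
    _ = 2 * k * ((m + 1).descFactorial (a + 1) * (m + 1).descFactorial (b + 1)) := by
        rw [hV, Nat.succ_descFactorial_succ, Nat.succ_descFactorial_succ]
        ring
    _ ≤ _ := le_card_copy_kbip_disjCopies

end UpperBound

end SimpleGraph

theorem stmt12_general (a b t n : ℕ) (ha : 1 ≤ a) (hab : a ≤ b) (hn : 0 < n)
    (hdvd : (2 * t - 2) ∣ n) :
    exGen n (Kbip a b) (Kbip 1 t) =
      copyCount' (Kbip a b) (disjCopies (n / (2 * t - 2)) (Kbip (t - 1) (t - 1))) := by
  obtain ⟨a, rfl⟩ := Nat.exists_eq_add_of_le' ha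
  obtain ⟨b, rfl⟩ := Nat.exists_eq_add_of_le' (ha.trans hab)
  obtain ⟨m, rfl⟩ : ∃ m, t = m + 2 := ⟨t - 2, by
    by_contra ht
    exact hn.ne' (Nat.eq_zero_of_zero_dvd (by rwa [show 2 * t - 2 = 0 by omega] at hdvd))⟩
  obtain ⟨k, rfl⟩ := hdvd
  have hcard : Fintype.card (Fin k × (Fin (m + 1) ⊕ Fin (m + 1))) = (2 * (m + 2) - 2) * k := by
    simp only [Fintype.card_prod, Fintype.card_sum, Fintype.card_fin]
    grind
  let Gstar := disjCopies k (Kbip (m + 1) (m + 1))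
  rw [Nat.mul_div_cancel_left k (by omega), show m + 2 - 1 = m + 1 from rfl, exGen]
  refine IsGreatest.csSup_eq ⟨⟨_, ?_, copyCount'_congr_right (Gstar.overFinIso hcard)⟩, ?_⟩
  · rw [containsCopy_iff_isContained, ← isContained_congr_right (Gstar.overFinIso hcard),
      ← containsCopy_iff_isContained]
    exact not_containsCopy_kbip_one_disjCopies (by omega)
  · rintro _ ⟨G, hG, rfl⟩
    exact copyCount'_kbip_le_disjCopies (by simp only [Fintype.card_fin]; grind) hG

/-- if `1 ≤ a ≤ b < t` and `(2t-2) ∣ n`, then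
`ex(n, K_{a,b}, K_{1,t}) = N(K_{a,b}, (n/(2t-2))·K_{t-1,t-1})`. -/
theorem stmt12 (a b t n : ℕ) (ha : 1 ≤ a) (hab : a ≤ b) (hbt : b < t) (hn : 0 < n)
    (hdvd : (2 * t - 2) ∣ n) :
    exGen n (Kbip a b) (Kbip 1 t) =
      copyCount' (Kbip a b) (disjCopies (n / (2 * t - 2)) (Kbip (t - 1) (t - 1))) :=
  stmt12_general a b t n ha hab hn hdvd
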